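/- arXiv:1808.07133 — 9 statements merged into one kernel-verified Lean document; each statement's English description precedes it below -/
import Mathlib

section
/- The discriminant (with respect to x) of the cubic polynomial g(x) := f*(-1, θ)·f*(1, θ) viewed as a polynomial in x = cos²θ equals -4096·b·(27a²b + 4)·(2 - 8a + 8a² + ab)², and this quantity is negative when b > 0 and 2 - 8a + 8a² + ab ≠ 0. -/
theorem stmt2 (a b : ℝ)
    (fstar : ℝ → ℝ → ℝ)
    (hf : ∀ ζ θ, fstar ζ θ =
      (ζ + 2*Real.cos θ) * (2*ζ*Real.cos θ + 1) + b*ζ - a*(ζ + 2*Real.cos θ)^3)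
    (c3 c2 c1 c0 : ℝ)
    (hc3 : c3 = 64*a^2)
    (hc2 : c2 = -48*a^2 + 32*a - 16)
    (hc1 : c1 = 12*a^2 - 16*a + 8 - 8*b + 24*a*b)
    (hc0 : c0 = -a^2 + 2*a - 1 - 2*b + 2*a*b - b^2) :
    (∀ θ : ℝ, fstar (-1) θ * fstar 1 θ =
      c3 * ((Real.cos θ)^2)^3 + c2 * ((Real.cos θ)^2)^2 + c1 * (Real.cos θ)^2 + c0) ∧
    18*c3*c2*c1*c0 - 4*c2^3*c0 + c2^2*c1^2 - 4*c3*c1^3 - 27*c3^2*c0^2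
      = -4096*b*(27*a^2*b + 4)*(2 - 8*a + 8*a^2 + a*b)^2 ∧
    (0 < b → 2 - 8*a + 8*a^2 + a*b ≠ 0 →
      -4096*b*(27*a^2*b + 4)*(2 - 8*a + 8*a^2 + a*b)^2 < 0) := by
  subst hc3 hc2 hc1 hc0
  refine ⟨fun θ => by rw [hf, hf]; ring, by ring, fun hb hne => ?_⟩
  have h1 : 0 < 27*a^2*b + 4 := by positivity
  have h2 : 0 < (2 - 8*a + 8*a^2 + a*b)^2 := by positivity
  nlinarith [mul_pos (mul_pos hb h1) h2]
end

section
/- If a > 0, b - 27a + 9 > 0, and θ ∈ (π/2, π), then f*(1, θ) > 0 and f*(-1, θ) < 0. -/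
theorem stmt3 (a b : ℝ) (hb : 0 < b) (ha : 0 < a) (h : b - 27*a + 9 > 0)
    (θ : ℝ) (hθ : θ ∈ Set.Ioo (Real.pi/2) Real.pi)
    (fstar : ℝ → ℝ)
    (hf : ∀ ζ, fstar ζ =
      -a*ζ^3 + (2*Real.cos θ - 6*a*Real.cos θ)*ζ^2 +
      (1 + b + 4*(Real.cos θ)^2 - 12*a*(Real.cos θ)^2)*ζ +
      2*Real.cos θ - 8*a*(Real.cos θ)^3) :
    0 < fstar 1 ∧ fstar (-1) < 0 := by
  obtain ⟨h1, h2⟩ := hθ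
  have hc0 : Real.cos θ < 0 := by
    apply Real.cos_neg_of_pi_div_two_lt_of_lt h1
    nlinarith [Real.pi_pos, h2]
  have hc1 : (-1 : ℝ) < Real.cos θ := by
    have := Real.cos_lt_cos_of_nonneg_of_le_pi (x := θ) (by nlinarith [Real.pi_pos]) le_rfl h2
    simpa [Real.cos_pi] using this
  set c := Real.cos θ with hc
  rw [hf 1, hf (-1)]
  constructor
  · nlinarith [sq_nonneg (1 + 2*c), sq_nonneg c, mul_pos ha hb,
      mul_pos (mul_pos ha ha) hb, sq_nonneg (a*(1+2*c)),
      mul_nonneg (sq_nonneg (1+2*c)) ha.le,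
      mul_nonneg (mul_nonneg (sq_nonneg (1+2*c)) ha.le) (neg_nonneg.mpr hc0.le)]
  · nlinarith [mul_pos (sub_pos.mpr hc1) (neg_pos.mpr hc0),
      mul_nonneg (mul_nonneg (sub_pos.mpr hc1).le (neg_pos.mpr hc0).le) ha.le,
      sq_nonneg (1 - 2*c), mul_pos ha hb, sq_nonneg (a*(1-2*c) - 1),
      mul_nonneg (mul_nonneg (sq_nonneg (1-2*c)) ha.le) (neg_nonneg.mpr hc0.le)]
end

section
/- Suppose a > 0 and b - 27a + 9 > 0. Then for every θ ∈ (π/2, π), the cubic polynomial f*(ζ, θ) in ζ has exactly one real zero in each of the intervals (-∞,-1), (-1,1), and (1,∞). -/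
private lemma cubic_four (A p q r x y z w : ℝ) (hA : A ≠ 0)
    (hxy : x ≠ y) (hxz : x ≠ z) (hxw : x ≠ w) (hyz : y ≠ z) (hyw : y ≠ w) (hzw : z ≠ w)
    (h1 : A*x^3 + p*x^2 + q*x + r = 0)
    (h2 : A*y^3 + p*y^2 + q*y + r = 0)
    (h3 : A*z^3 + p*z^2 + q*z + r = 0)
    (h4 : A*w^3 + p*w^2 + q*w + r = 0) : False := by
  have g2 : A*(x^2+x*y+y^2) + p*(x+y) + q = 0 := by
    have hx : (x - y) * (A*(x^2+x*y+y^2) + p*(x+y) + q) = 0 := by linear_combination h1 - h2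
    rcases mul_eq_zero.mp hx with h | h
    · exact absurd (sub_eq_zero.mp h) hxy
    · exact h
  have g3 : A*(x^2+x*z+z^2) + p*(x+z) + q = 0 := by
    have hx : (x - z) * (A*(x^2+x*z+z^2) + p*(x+z) + q) = 0 := by linear_combination h1 - h3
    rcases mul_eq_zero.mp hx with h | h
    · exact absurd (sub_eq_zero.mp h) hxz
    · exact h
  have g4 : A*(x^2+x*w+w^2) + p*(x+w) + q = 0 := by
    have hx : (x - w) * (A*(x^2+x*w+w^2) + p*(x+w) + q) = 0 := by linear_combination h1 - h4
    rcases mul_eq_zero.mp hx with h | h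
    · exact absurd (sub_eq_zero.mp h) hxw
    · exact h
  have s3 : A*(x+y+z) + p = 0 := by
    have hx : (y - z) * (A*(x+y+z) + p) = 0 := by linear_combination g2 - g3
    rcases mul_eq_zero.mp hx with h | h
    · exact absurd (sub_eq_zero.mp h) hyz
    · exact h
  have s4 : A*(x+y+w) + p = 0 := by
    have hx : (y - w) * (A*(x+y+w) + p) = 0 := by linear_combination g2 - g4
    rcases mul_eq_zero.mp hx with h | h
    · exact absurd (sub_eq_zero.mp h) hyw
    · exact h
  have : A * (z - w) = 0 := by linear_combination s3 - s4
  rcases mul_eq_zero.mp this with h | h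
  · exact hA h
  · exact hzw (sub_eq_zero.mp h)

private lemma aux1 (a b s : ℝ) (ha : 0 < a) (hb : 0 < b) (h : b - 27*a + 9 > 0)
    (h1 : 1 < s) (h3 : s < 3) : a*s^3 - s^2 - b < 0 := by
  nlinarith [mul_pos (pow_pos (by linarith : (0:ℝ) < s) 3) h,
    mul_nonneg (mul_nonneg hb.le (by linarith : (0:ℝ) ≤ 3 - s)) (by nlinarith : (0:ℝ) ≤ s^2+3*s+9),
    mul_nonneg (by positivity : (0:ℝ) ≤ 9*s^2) (by linarith : (0:ℝ) ≤ 3 - s)]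

private lemma aux2 (a b t : ℝ) (ha : 0 < a) (hb : 0 < b) (h : b - 27*a + 9 > 0)
    (h1 : -1 < t) (h3 : t < 1) : 0 < b + t^2 - a*t^3 := by
  rcases le_or_gt t 0 with ht | ht
  · nlinarith [mul_nonneg ha.le (by nlinarith [mul_nonneg (neg_nonneg.mpr ht) (sq_nonneg t)] : (0:ℝ) ≤ -t^3), sq_nonneg t]
  · nlinarith [mul_pos (pow_pos ht 3) h,
      mul_nonneg (mul_nonneg hb.le (by linarith : (0:ℝ) ≤ 3 - t)) (by nlinarith : (0:ℝ) ≤ t^2+3*t+9),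
      mul_nonneg (by positivity : (0:ℝ) ≤ 9*t^2) (by linarith : (0:ℝ) ≤ 3 - t)]

set_option maxHeartbeats 1600000 in
theorem stmt4 (a b : ℝ) (hb : 0 < b) (ha : 0 < a) (h : b - 27*a + 9 > 0)
    (θ : ℝ) (hθ : θ ∈ Set.Ioo (Real.pi/2) Real.pi)
    (fstar : ℝ → ℝ)
    (hf : ∀ ζ, fstar ζ =
      -a*ζ^3 + (2 - 6*a)*Real.cos θ*ζ^2 +
      (1 + b + 4*(Real.cos θ)^2 - 12*a*(Real.cos θ)^2)*ζ +
      2*Real.cos θ - 8*a*(Real.cos θ)^3) :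
    (∃! ζ, ζ < -1 ∧ fstar ζ = 0) ∧
    (∃! ζ, ζ ∈ Set.Ioo (-1 : ℝ) 1 ∧ fstar ζ = 0) ∧
    (∃! ζ, 1 < ζ ∧ fstar ζ = 0) := by
  obtain ⟨hθ1, hθ2⟩ := hθ
  set c := Real.cos θ with hcdef
  have hπ : (0:ℝ) < Real.pi := Real.pi_pos
  have hc0 : c < 0 := Real.cos_neg_of_pi_div_two_lt_of_lt hθ1 (by linarith)
  have hc1 : -1 < c := by
    have := Real.cos_lt_cos_of_nonneg_of_le_pi (by linarith : 0 ≤ θ) le_rfl hθ2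
    simpa [Real.cos_pi] using this
  -- continuity
  have hfeq : fstar = fun ζ => -a*ζ^3 + (2 - 6*a)*c*ζ^2 +
      (1 + b + 4*c^2 - 12*a*c^2)*ζ + 2*c - 8*a*c^3 := funext hf
  have hcont : Continuous fstar := by rw [hfeq]; fun_prop
  -- sign at -1 and 1
  have hm1 : fstar (-1) < 0 := by
    have h1 := aux1 a b (1 - 2*c) ha hb h (by linarith) (by linarith)
    rw [hf]; nlinarith [h1]
  have hp1 : 0 < fstar 1 := by
    have h1 := aux2 a b (1 + 2*c) ha hb h (by linarith) (by linarith)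
    rw [hf]; nlinarith [h1]
  -- a big point T
  obtain ⟨T, haT, hT1⟩ : ∃ T : ℝ, a * T = 19*a + b + 16 ∧ 1 < T :=
    ⟨(19*a + b + 16)/a, by field_simp, (one_lt_div ha).mpr (by linarith)⟩
  have hT0 : 0 < T := by linarith
  -- coefficient bounds
  have hA1 : (2-6*a)*c ≤ 2+6*a := by nlinarith [mul_pos ha (by linarith : (0:ℝ) < 1 + c)]
  have hA2 : -(2+6*a) ≤ (2-6*a)*c := by nlinarith [mul_pos ha (by linarith : (0:ℝ) < 1 - c)]
  have hq : 1 + b + 4*c^2 - 12*a*c^2 ≤ 5 + b := by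
    nlinarith [sq_nonneg c, mul_nonneg ha.le (sq_nonneg c)]
  have hr1 : 2*c - 8*a*c^3 ≤ 8*a := by
    nlinarith [mul_nonneg ha.le (by nlinarith [mul_nonneg (by linarith : (0:ℝ) ≤ -c) (sq_nonneg c)] : (0:ℝ) ≤ 1 + c^3)]
  have hr2 : -2 ≤ 2*c - 8*a*c^3 := by
    nlinarith [mul_nonneg ha.le (by nlinarith [mul_nonneg (by linarith : (0:ℝ) ≤ -c) (sq_nonneg c)] : (0:ℝ) ≤ -c^3)]
  have hT3 : a*T^3 = (19*a+b+16)*T^2 := by linear_combination T^2 * haT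
  have F1 : (2-6*a)*c*T^2 ≤ (2+6*a)*T^2 := mul_le_mul_of_nonneg_right hA1 (sq_nonneg T)
  have G1 : -(2+6*a)*T^2 ≤ (2-6*a)*c*T^2 := mul_le_mul_of_nonneg_right hA2 (sq_nonneg T)
  have F2 : (1+b+4*c^2-12*a*c^2)*T ≤ (5+b)*T := mul_le_mul_of_nonneg_right hq hT0.le
  have F5 : (5+b)*T ≤ (5+b)*T^2 := by nlinarith [sq_nonneg (T-1), hb]
  have F6 : 8*a ≤ 8*a*T^2 := by nlinarith [mul_nonneg ha.le (by nlinarith [sq_nonneg (T-1)] : (0:ℝ) ≤ T^2 - 1)]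
  have F7 : 0 ≤ a*T^2 := mul_nonneg ha.le (sq_nonneg T)
  have F8 : (0:ℝ) < T^2 := by positivity
  have F9 : (1:ℝ) ≤ T^2 := by nlinarith [sq_nonneg (T-1)]
  have hfT : fstar T < 0 := by
    rw [hf]
    linarith [hT3, F1, F2, F5, F6, F7, F8, hr1]
  have hfmT : 0 < fstar (-T) := by
    rw [hf]
    nlinarith [hT3, G1, F2, F5, F7, F8, F9, hr2]
  -- three roots via IVT
  have hcont' : ∀ (u v : ℝ), ContinuousOn fstar (Set.Icc u v) := fun u v => hcont.continuousOn
  obtain ⟨x₁, hx₁mem, hx₁⟩ : ∃ x ∈ Set.Ioo (-T) (-1:ℝ), fstar x = 0 := by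
    have := intermediate_value_Ioo' (by linarith : -T ≤ (-1:ℝ)) (hcont' _ _)
    obtain ⟨x, hx, hx0⟩ := this (⟨hm1, hfmT⟩ : (0:ℝ) ∈ Set.Ioo (fstar (-1)) (fstar (-T)))
    exact ⟨x, hx, hx0⟩
  obtain ⟨x₂, hx₂mem, hx₂⟩ : ∃ x ∈ Set.Ioo (-1:ℝ) 1, fstar x = 0 := by
    have := intermediate_value_Ioo (by linarith : (-1:ℝ) ≤ 1) (hcont' _ _)
    obtain ⟨x, hx, hx0⟩ := this (⟨hm1, hp1⟩ : (0:ℝ) ∈ Set.Ioo (fstar (-1)) (fstar 1))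
    exact ⟨x, hx, hx0⟩
  obtain ⟨x₃, hx₃mem, hx₃⟩ : ∃ x ∈ Set.Ioo (1:ℝ) T, fstar x = 0 := by
    have := intermediate_value_Ioo' (by linarith : (1:ℝ) ≤ T) (hcont' _ _)
    obtain ⟨x, hx, hx0⟩ := this (⟨hfT, hp1⟩ : (0:ℝ) ∈ Set.Ioo (fstar T) (fstar 1))
    exact ⟨x, hx, hx0⟩
  have hx₁lt : x₁ < -1 := hx₁mem.2
  have hx₂i : -1 < x₂ ∧ x₂ < 1 := ⟨hx₂mem.1, hx₂mem.2⟩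
  have hx₃gt : 1 < x₃ := hx₃mem.1
  have hA : -a ≠ 0 := by linarith
  have key : ∀ x y z w : ℝ, x ≠ y → x ≠ z → x ≠ w → y ≠ z → y ≠ w → z ≠ w →
      fstar x = 0 → fstar y = 0 → fstar z = 0 → fstar w = 0 → False := by
    intro x y z w hxy hxz hxw hyz hyw hzw r1 r2 r3 r4
    rw [hf] at r1 r2 r3 r4
    exact cubic_four (-a) ((2-6*a)*c) (1+b+4*c^2-12*a*c^2) (2*c-8*a*c^3) x y z w hA
      hxy hxz hxw hyz hyw hzw (by linear_combination r1) (by linear_combination r2)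
      (by linear_combination r3) (by linear_combination r4)
  refine ⟨⟨x₁, ⟨hx₁lt, hx₁⟩, ?_⟩, ⟨x₂, ⟨⟨hx₂i.1, hx₂i.2⟩, hx₂⟩, ?_⟩, ⟨x₃, ⟨hx₃gt, hx₃⟩, ?_⟩⟩
  · rintro y ⟨hy, hy0⟩
    by_contra hne
    exact key y x₁ x₂ x₃ hne (by intro e; subst e; linarith [hx₂i.1]) (by intro e; subst e; linarith)
      (by intro e; subst e; linarith [hx₂i.1]) (by intro e; subst e; linarith)
      (by intro e; subst e; linarith [hx₂i.2]) hy0 hx₁ hx₂ hx₃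
  · rintro y ⟨⟨hy1, hy2⟩, hy0⟩
    by_contra hne
    exact key y x₂ x₁ x₃ hne (by intro e; subst e; linarith) (by intro e; subst e; linarith)
      (by intro e; subst e; linarith [hx₂i.1]) (by intro e; subst e; linarith [hx₂i.2])
      (by intro e; subst e; linarith) hy0 hx₂ hx₁ hx₃
  · rintro y ⟨hy, hy0⟩
    by_contra hne
    exact key y x₃ x₁ x₂ hne (by intro e; subst e; linarith) (by intro e; subst e; linarith [hx₂i.2])
      (by intro e; subst e; linarith) (by intro e; subst e; linarith [hx₂i.2])
      (by intro e; subst e; linarith [hx₂i.1]) hy0 hx₃ hx₁ hx₂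
end

section
/- Assume a < 0, 1 + a + b > 0, b > 0, and θ ∈ (π/2, π). If all three zeros of the cubic f*(ζ, θ) in ζ are real, then exactly one of them lies in the interval (0,1) and the other two lie in (1, ∞). -/
/-- Key contradiction lemma: if all three roots lie in (0,1), Vieta's relations
are incompatible with `b > 0`. -/
lemma stmt5_key (u v w d A b : ℝ) (hu0 : 0 < u) (hu1 : u < 1) (hv0 : 0 < v) (hv1 : v < 1)
    (hw0 : 0 < w) (hw1 : w < 1) (hd : 0 < d) (hA : 0 < A) (hb : 0 < b)
    (e1 : A * (u + v + w - 6*d) = 2*d)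
    (e2 : A * (u*v + u*w + v*w - 12*d^2) = 1 + b + 4*d^2) : False := by
  have h6 : 0 < u + v + w - 6*d := by
    rcases le_or_gt (u + v + w - 6*d) 0 with h | h
    · have h1 : 0 ≤ A * (-(u + v + w - 6*d)) := mul_nonneg hA.le (by linarith)
      nlinarith
    · exact h
  have hd2 : d < 1/2 := by linarith
  -- A * G = -2*d*b where G is the combination below
  have hG : A * ((1+4*d^2)*(u+v+w-6*d) - 2*d*(u*v+u*w+v*w-12*d^2)) = -(2*d*b) := by
    linear_combination (1+4*d^2)*e1 - 2*d*e2
  have hGneg : (1+4*d^2)*(u+v+w-6*d) - 2*d*(u*v+u*w+v*w-12*d^2) < 0 := by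
    rcases le_or_gt 0 ((1+4*d^2)*(u+v+w-6*d) - 2*d*(u*v+u*w+v*w-12*d^2)) with h | h
    · have := mul_nonneg hA.le h
      nlinarith [mul_pos hd hb]
    · exact h
  have hsq : 0 ≤ (u+v+w-6*d)^2 - 3*(u*v+u*w+v*w - 4*d*(u+v+w) + 12*d^2) := by
    nlinarith [sq_nonneg (u-v), sq_nonneg (v-w), sq_nonneg (u-w)]
  nlinarith [mul_pos (show (0:ℝ) < 1-2*d by linarith) h6,
             mul_pos (mul_pos hd h6) (show (0:ℝ) < 3-(u+v+w) by linarith),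
             mul_nonneg hd.le hsq]

lemma stmt5_mul3_pos (x y z : ℝ) (hx : 0 < x) (hy : 0 < y) (hz : z < 0) :
    x * y * z < 0 := mul_neg_of_pos_of_neg (mul_pos hx hy) hz

lemma stmt5_mul3_neg (x y z : ℝ) (hx : x < 0) (hy : y < 0) (hz : z < 0) :
    x * y * z < 0 := mul_neg_of_pos_of_neg (mul_pos_of_neg_of_neg hx hy) hz

set_option maxHeartbeats 1000000 in
theorem stmt5 (a b : ℝ) (ha : a < 0) (hab : 0 < 1 + a + b) (hb : 0 < b)
    (θ : ℝ) (hθ : θ ∈ Set.Ioo (Real.pi/2) Real.pi)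
    (fstar : ℝ → ℝ)
    (hf : ∀ ζ, fstar ζ =
      -a*ζ^3 + (2 - 6*a)*Real.cos θ*ζ^2 +
      (1 + b + 4*(Real.cos θ)^2 - 12*a*(Real.cos θ)^2)*ζ +
      2*Real.cos θ - 8*a*(Real.cos θ)^3)
    (r : Fin 3 → ℝ)
    (hroots : ∀ ζ, fstar ζ = -a * (ζ - r 0) * (ζ - r 1) * (ζ - r 2)) :
    ∃ σ : Equiv.Perm (Fin 3),
      r (σ 0) ∈ Set.Ioo (0:ℝ) 1 ∧ r (σ 1) ∈ Set.Ioi (1:ℝ) ∧ r (σ 2) ∈ Set.Ioi (1:ℝ) := by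
  obtain ⟨hθ1, hθ2⟩ := hθ
  set c := Real.cos θ with hc
  have hc0 : c < 0 := Real.cos_neg_of_pi_div_two_lt_of_lt hθ1 (by linarith [Real.pi_pos])
  have hc1 : -1 < c := by
    have := Real.cos_lt_cos_of_nonneg_of_le_pi (by linarith [Real.pi_pos] : (0:ℝ) ≤ θ) le_rfl hθ2
    simpa [Real.cos_pi] using this
  have ha' : 0 < -a := by linarith
  -- Vieta's formulas from evaluation at 0, 1, -1
  have h0 := (hf 0).symm.trans (hroots 0)
  have h1 := (hf 1).symm.trans (hroots 1)
  have hm1 := (hf (-1)).symm.trans (hroots (-1))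
  have e1 : a * (r 0 + r 1 + r 2) = (2 - 6*a) * c := by
    linear_combination (-(1:ℝ)/2) * h1 + (-(1:ℝ)/2) * hm1 + h0
  have e2 : -a * (r 0 * r 1 + r 0 * r 2 + r 1 * r 2) = 1 + b + 4*c^2 - 12*a*c^2 := by
    linear_combination (-(1:ℝ)/2) * h1 + ((1:ℝ)/2) * hm1
  -- each root is a zero of fstar
  have hzero : ∀ ζ : ℝ, -a*ζ^3 + (2 - 6*a)*c*ζ^2 + (1 + b + 4*c^2 - 12*a*c^2)*ζ +
      2*c - 8*a*c^3 = 0 → 0 < ζ := by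
    intro ζ hzi
    by_contra h
    push_neg at h
    have hw : ζ + 2*c < 0 := by linarith
    nlinarith [mul_pos ha' (mul_pos (mul_pos (neg_pos.2 hw) (neg_pos.2 hw)) (neg_pos.2 hw)),
      mul_nonneg (neg_nonneg.2 hc0.le) (neg_nonneg.2 h),
      mul_nonneg (neg_nonneg.2 hw.le) (mul_nonneg (neg_nonneg.2 hc0.le) (neg_nonneg.2 h)),
      mul_nonneg hb.le (neg_nonneg.2 h)]
  have hpos0 : 0 < r 0 := hzero _ (by linear_combination (hf (r 0)).symm.trans (hroots (r 0)))
  have hpos1 : 0 < r 1 := hzero _ (by linear_combination (hf (r 1)).symm.trans (hroots (r 1)))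
  have hpos2 : 0 < r 2 := hzero _ (by linear_combination (hf (r 2)).symm.trans (hroots (r 2)))
  -- fstar 1 > 0
  have hf1pos : (0:ℝ) < -a*1^3 + (2 - 6*a)*c*1^2 + (1 + b + 4*c^2 - 12*a*c^2)*1 +
      2*c - 8*a*c^3 := by
    rcases le_or_gt 0 (1+a) with h | h
    · nlinarith [mul_nonneg (sq_nonneg (1+2*c)) (mul_nonneg ha'.le (by linarith : (0:ℝ) ≤ 2+2*c)),
        mul_nonneg h (sq_nonneg (1+2*c))]
    · nlinarith [mul_nonneg (sq_nonneg (1+2*c)) (mul_nonneg ha'.le (by linarith : (0:ℝ) ≤ 2+2*c)),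
        mul_nonpos_of_nonneg_of_nonpos
          (by nlinarith [sq_nonneg (1+2*c)] : (0:ℝ) ≤ 1-(1+2*c)^2) h.le]
  have hProd : 0 < (1 - r 0) * (1 - r 1) * (1 - r 2) := by
    have hval : 0 < -a * ((1 - r 0) * (1 - r 1) * (1 - r 2)) := by
      have heq : -a * ((1 - r 0) * (1 - r 1) * (1 - r 2)) =
          -a*1^3 + (2 - 6*a)*c*1^2 + (1 + b + 4*c^2 - 12*a*c^2)*1 + 2*c - 8*a*c^3 := by
        linear_combination -h1
      rw [heq]; exact hf1pos
    by_contra hP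
    push_neg at hP
    nlinarith [mul_nonneg ha'.le (neg_nonneg.2 hP)]
  -- case analysis on positions of roots relative to 1
  rcases lt_trichotomy (r 0) 1 with g0 | g0 | g0
  · rcases lt_trichotomy (r 1) 1 with g1 | g1 | g1
    · rcases lt_trichotomy (r 2) 1 with g2 | g2 | g2
      · -- all three in (0,1): contradiction
        exfalso
        refine stmt5_key (r 0) (r 1) (r 2) (-c) (-a) b hpos0 g0 hpos1 g1 hpos2 g2
          (by linarith) ha' hb ?_ ?_
        · linear_combination -e1
        · linear_combination e2
      · exfalso; rw [g2] at hProd; simp at hProd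
      · exfalso
        linarith [stmt5_mul3_pos (1 - r 0) (1 - r 1) (1 - r 2)
          (by linarith) (by linarith) (by linarith)]
    · exfalso; rw [g1] at hProd; simp at hProd
    · rcases lt_trichotomy (r 2) 1 with g2 | g2 | g2
      · exfalso
        linarith [stmt5_mul3_pos (1 - r 2) (1 - r 0) (1 - r 1)
          (by linarith) (by linarith) (by linarith), hProd,
          show (1 - r 2) * (1 - r 0) * (1 - r 1) = (1 - r 0) * (1 - r 1) * (1 - r 2) by ring]
      · exfalso; rw [g2] at hProd; simp at hProd
      · exact ⟨1, ⟨hpos0, g0⟩, g1, g2⟩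
  · exfalso; rw [g0] at hProd; simp at hProd
  · rcases lt_trichotomy (r 1) 1 with g1 | g1 | g1
    · rcases lt_trichotomy (r 2) 1 with g2 | g2 | g2
      · exfalso
        linarith [stmt5_mul3_pos (1 - r 1) (1 - r 2) (1 - r 0)
          (by linarith) (by linarith) (by linarith), hProd,
          show (1 - r 1) * (1 - r 2) * (1 - r 0) = (1 - r 0) * (1 - r 1) * (1 - r 2) by ring]
      · exfalso; rw [g2] at hProd; simp at hProd
      · refine ⟨Equiv.swap 0 1, ?_, ?_, ?_⟩
        · rw [Equiv.swap_apply_left]; exact ⟨hpos1, g1⟩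
        · rw [Equiv.swap_apply_right]; exact g0
        · rw [Equiv.swap_apply_of_ne_of_ne (by decide) (by decide)]; exact g2
    · exfalso; rw [g1] at hProd; simp at hProd
    · rcases lt_trichotomy (r 2) 1 with g2 | g2 | g2
      · refine ⟨Equiv.swap 0 2, ?_, ?_, ?_⟩
        · rw [Equiv.swap_apply_left]; exact ⟨hpos2, g2⟩
        · rw [Equiv.swap_apply_of_ne_of_ne (by decide) (by decide)]; exact g1
        · rw [Equiv.swap_apply_right]; exact g0
      · exfalso; rw [g2] at hProd; simp at hProd
      · exfalso
        linarith [stmt5_mul3_neg (1 - r 0) (1 - r 1) (1 - r 2)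
          (by linarith) (by linarith) (by linarith)]
end

section
/- If a < 0, b > 0, θ ∈ (π/2, π), and 3a(b - 4cos²θ + 1) + 4cos²θ ≥ 0 (i.e., the derivative ∂f*/∂ζ has real roots), then cos θ ≤ -√(-3a(1+b)/(4(1-3a))) and moreover cos θ < 3a/(2(1-3a)), so that 2(1-3a)cos θ - 3a < 0 and hence the root (2(1-3a)cos θ - √(4cos²θ + 3a + 3ab - 12a cos²θ))/(3a) of ∂f*/∂ζ is strictly greater than 1. -/
theorem stmt6 (a b : ℝ) (ha : a < 0) (hb : 0 < b)
    (θ : ℝ) (hθ : θ ∈ Set.Ioo (Real.pi/2) Real.pi)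
    (hreal : 3*a*(b - 4*(Real.cos θ)^2 + 1) + 4*(Real.cos θ)^2 ≥ 0) :
    Real.cos θ ≤ -Real.sqrt (-3*a*(1 + b) / (4*(1 - 3*a))) ∧
    Real.cos θ < 3*a / (2*(1 - 3*a)) ∧
    2*(1 - 3*a)*Real.cos θ - 3*a < 0 ∧
    (2*(1 - 3*a)*Real.cos θ -
      Real.sqrt (4*(Real.cos θ)^2 + 3*a + 3*a*b - 12*a*(Real.cos θ)^2)) / (3*a) > 1 := by
  set c := Real.cos θ with hc
  have hcneg : c < 0 := by
    apply Real.cos_neg_of_pi_div_two_lt_of_lt hθ.1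
    have := Real.pi_pos
    linarith [hθ.2]
  have hpos : (0:ℝ) < 4*(1 - 3*a) := by linarith
  have hsq : -3*a*(1 + b) / (4*(1 - 3*a)) ≤ c^2 := by
    rw [div_le_iff₀ hpos]
    nlinarith
  have h1 : c ≤ -Real.sqrt (-3*a*(1 + b) / (4*(1 - 3*a))) := by
    have : Real.sqrt (-3*a*(1 + b) / (4*(1 - 3*a))) ≤ Real.sqrt (c^2) :=
      Real.sqrt_le_sqrt hsq
    rw [Real.sqrt_sq_eq_abs, abs_of_neg hcneg] at this
    linarith
  have h3 : 2*(1 - 3*a)*c - 3*a < 0 := by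
    by_contra h
    push_neg at h
    nlinarith [mul_nonneg (le_of_lt (neg_pos.mpr hcneg)) h]
  have h2 : c < 3*a / (2*(1 - 3*a)) := by
    rw [lt_div_iff₀ (by linarith : (0:ℝ) < 2*(1 - 3*a))]
    linarith
  refine ⟨h1, h2, h3, ?_⟩
  rw [gt_iff_lt, lt_div_iff_of_neg (by linarith : 3*a < 0)]
  have := Real.sqrt_nonneg (4*c^2 + 3*a + 3*a*b - 12*a*c^2)
  linarith
end

section
/- Let a > 1/4. For θ ∈ (π/2, π), the free coefficient (constant term in ζ) of f*(ζ, θ), namely 2cos θ(1 - 4a cos²θ), vanishes if and only if cos θ = -1/(2√a). Moreover, when cos θ = -1/(2√a), the coefficient of ζ in f*(ζ,θ), namely 1 + b + 4cos²θ - 12a cos²θ = b + 1/a - 2, is nonzero provided 9 - 27a + b ≥ 0 and b > 0. -/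
theorem stmt10 (a b : ℝ) (ha : 1/4 < a) (hb : 0 < b)
    (θ : ℝ) (hθ : θ ∈ Set.Ioo (Real.pi/2) Real.pi) :
    (2*Real.cos θ*(1 - 4*a*(Real.cos θ)^2) = 0 ↔ Real.cos θ = -1/(2*Real.sqrt a)) ∧
    (Real.cos θ = -1/(2*Real.sqrt a) →
      1 + b + 4*(Real.cos θ)^2 - 12*a*(Real.cos θ)^2 = b + 1/a - 2 ∧
      (9 - 27*a + b ≥ 0 → 1 + b + 4*(Real.cos θ)^2 - 12*a*(Real.cos θ)^2 ≠ 0)) := by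
  obtain ⟨h1, h2⟩ := hθ
  have ha0 : (0:ℝ) < a := by linarith
  have hs : Real.sqrt a * Real.sqrt a = a := Real.mul_self_sqrt ha0.le
  have hspos : 0 < Real.sqrt a := Real.sqrt_pos.mpr ha0
  have hc : Real.cos θ < 0 :=
    Real.cos_neg_of_pi_div_two_lt_of_lt h1 (by nlinarith [Real.pi_pos])
  set c := Real.cos θ with hcdef
  constructor
  · constructor
    · intro h
      have h4 : 4*a*c^2 = 1 := by
        rcases mul_eq_zero.mp h with h' | h'
        · nlinarith
        · nlinarith
      have hsq : (2*Real.sqrt a*c)^2 = 1 := by nlinarith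
      have hneg : 2*Real.sqrt a*c < 0 := by nlinarith
      have : 2*Real.sqrt a*c = -1 := by nlinarith
      field_simp
      linarith
    · intro h
      have h4 : 4*a*c^2 = 1 := by
        have : c * (2*Real.sqrt a) = -1 := by
          rw [h]; field_simp
        nlinarith
      nlinarith
  · intro h
    have h4 : 4*a*c^2 = 1 := by
      have : c * (2*Real.sqrt a) = -1 := by
        rw [h]; field_simp
      nlinarith
    have hci : c^2 = 1/(4*a) := by field_simp; linarith
    constructor
    · rw [hci]; field_simp; ring
    · intro h9 hz
      rw [hci] at hz
      have hba : b + 1/a - 2 = 0 := by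
        field_simp at hz ⊢; nlinarith
      have h1a : 1/a = 2 - b := by linarith
      have : a * (1/a) = 1 := by field_simp
      nlinarith [sq_nonneg (a - 1/2), sq_nonneg b]
end

section
/- Suppose 1/3 ≤ a, b > 0, 9 - 27a + b > 0, and ζ₀ ≥ 1. Then (8a - 2)ζ₀³ + (-12a + b + 5)ζ₀² + (6a - 2)ζ₀ - a > 0; in particular ζ₀ is not a root of the cubic (8a-2)ζ³ + (-12a+b+5)ζ² + (6a-2)ζ - a. -/
theorem stmt11 (a b ζ₀ : ℝ) (ha : 1/3 ≤ a) (hb : 0 < b)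
    (h : 0 < 9 - 27*a + b) (hζ : 1 ≤ ζ₀) :
    0 < (8*a - 2)*ζ₀^3 + (-12*a + b + 5)*ζ₀^2 + (6*a - 2)*ζ₀ - a ∧
    (8*a - 2)*ζ₀^3 + (-12*a + b + 5)*ζ₀^2 + (6*a - 2)*ζ₀ - a ≠ 0 := by
  have hpos : 0 < (8*a - 2)*ζ₀^3 + (-12*a + b + 5)*ζ₀^2 + (6*a - 2)*ζ₀ - a := by
    nlinarith [mul_pos (mul_pos h (mul_pos (lt_of_lt_of_le one_pos hζ) (lt_of_lt_of_le one_pos hζ))) (lt_of_lt_of_le one_pos hζ), sq_nonneg (ζ₀ - 1), sq_nonneg ζ₀, mul_nonneg (sub_nonneg.2 hζ) (sq_nonneg (ζ₀-1)), mul_nonneg (mul_nonneg (sub_nonneg.2 hζ) (sub_nonneg.2 hζ)) (sub_nonneg.2 hζ)]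
  exact ⟨hpos, ne_of_gt hpos⟩
end

section
/- Suppose a > 1/3, b ≥ 27a - 9, b > 0, θ ∈ (π/2, π), and ζ < -1. Then the quadratic Q(ζ) := -3a + 4ζcos θ(1 - 3a) + ζ²(-12a cos²θ + 4cos²θ + 27a - 8) is strictly positive. -/
theorem stmt14 (a b θ ζ : ℝ) (ha : 1/3 < a) (hb1 : 27*a - 9 ≤ b) (hb : 0 < b)
    (hθ : θ ∈ Set.Ioo (Real.pi/2) Real.pi) (hζ : ζ < -1) :
    0 < -3*a + 4*ζ*Real.cos θ*(1 - 3*a) +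
      ζ^2*(-12*a*(Real.cos θ)^2 + 4*(Real.cos θ)^2 + 27*a - 8) := by
  obtain ⟨h1, h2⟩ := hθ
  set c := Real.cos θ with hc
  have hθ0 : 0 ≤ θ := le_trans (by positivity) h1.le
  have hcneg : c < 0 := Real.cos_neg_of_pi_div_two_lt_of_lt h1
    (lt_trans h2 (by linarith [Real.pi_pos]))
  have hcgt : -1 < c := by
    have := Real.cos_lt_cos_of_nonneg_of_le_pi hθ0 le_rfl h2
    rwa [Real.cos_pi] at this
  have ht : 0 < 3*a - 1 := by linarith
  have hz2 : 0 < ζ^2 - 1 := by nlinarith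
  have h1c : 0 ≤ 1 - c^2 := by nlinarith
  have hzc : 0 < ζ * (ζ - c) := mul_pos_of_neg_of_neg (by linarith) (by linarith)
  nlinarith [mul_nonneg (mul_nonneg ht.le (sq_nonneg ζ)) h1c,
    mul_pos ht hzc, mul_pos ht hz2]
end

section
/- Let a, b > 0 with 27a > b + 9. The discriminant of Δ(x) (a cubic in x) equals -65536·b·(27a²b - 9ab + b + 1)³·(ab² + b + 1), and this is negative; hence Δ(x) has exactly one real zero. Moreover Δ(0) = 4a(b+1)³ > 0 and Δ(1) = -4(27a - b - 9)(ab² + b + 1) < 0, so the unique real zero x' of Δ satisfies 0 < x' < 1. -/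
/-- If a cubic (possibly degenerate) has two distinct real roots, its
discriminant is nonnegative. -/
lemma cubic_two_roots_disc_nonneg (c3 c2 c1 c0 r s : ℝ) (hrs : r ≠ s)
    (h1 : c3*r^3 + c2*r^2 + c1*r + c0 = 0)
    (h2 : c3*s^3 + c2*s^2 + c1*s + c0 = 0) :
    0 ≤ 18*c3*c2*c1*c0 - 4*c2^3*c0 + c2^2*c1^2 - 4*c3*c1^3 - 27*c3^2*c0^2 := by
  have hrs' : r - s ≠ 0 := sub_ne_zero.mpr hrs
  have e1 : (r - s) * (c3*(r^2 + r*s + s^2) + c2*(r + s) + c1) = 0 := by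
    linear_combination h1 - h2
  have e2 : c3*(r^2 + r*s + s^2) + c2*(r + s) + c1 = 0 :=
    (mul_eq_zero.mp e1).resolve_left hrs'
  have hc1 : c1 = -(c3*(r^2 + r*s + s^2) + c2*(r + s)) := by linarith
  have hc0 : c0 = -(c3*r^3 + c2*r^2 + c1*r) := by linarith
  subst hc1
  subst hc0
  have key : 18*c3*c2*(-(c3*(r^2 + r*s + s^2) + c2*(r + s)))*(-(c3*r^3 + c2*r^2 + (-(c3*(r^2 + r*s + s^2) + c2*(r + s)))*r))
      - 4*c2^3*(-(c3*r^3 + c2*r^2 + (-(c3*(r^2 + r*s + s^2) + c2*(r + s)))*r))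
      + c2^2*(-(c3*(r^2 + r*s + s^2) + c2*(r + s)))^2
      - 4*c3*(-(c3*(r^2 + r*s + s^2) + c2*(r + s)))^3
      - 27*c3^2*(-(c3*r^3 + c2*r^2 + (-(c3*(r^2 + r*s + s^2) + c2*(r + s)))*r))^2
      = ((r - s)*(c3*r + c2 + c3*(r + s))*(c3*s + c2 + c3*(r + s)))^2 := by ring
  rw [key]
  positivity

theorem stmt16 (a b : ℝ) (ha : 0 < a) (hb : 0 < b) (h : 27*a > b + 9)
    (Δ : ℝ → ℝ)
    (hΔ : ∀ x, Δ x =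
      36*(-a)*(2 - 6*a)*(1 + b + (4 - 12*a)*x)*(1 - 4*a*x)*x
      - 8*(2 - 6*a)^3*(1 - 4*a*x)*x^2
      + (2 - 6*a)^2*x*(1 + b + (4 - 12*a)*x)^2
      + 4*a*(1 + b + (4 - 12*a)*x)^3
      - 108*a^2*x*(1 - 4*a*x)^2) :
    (∃ d3 d2 d1 d0 : ℝ,
      (∀ x, Δ x = d3*x^3 + d2*x^2 + d1*x + d0) ∧
      18*d3*d2*d1*d0 - 4*d2^3*d0 + d2^2*d1^2 - 4*d3*d1^3 - 27*d3^2*d0^2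
        = -65536*b*(27*a^2*b - 9*a*b + b + 1)^3*(a*b^2 + b + 1)) ∧
    -65536*b*(27*a^2*b - 9*a*b + b + 1)^3*(a*b^2 + b + 1) < 0 ∧
    (∃! x : ℝ, Δ x = 0) ∧
    Δ 0 = 4*a*(b + 1)^3 ∧ 0 < Δ 0 ∧
    Δ 1 = -4*(27*a - b - 9)*(a*b^2 + b + 1) ∧ Δ 1 < 0 ∧
    (∀ x : ℝ, Δ x = 0 → 0 < x ∧ x < 1) := by
  set d3 : ℝ := 64 - 256*a with hd3
  set d2 : ℝ := -32 + 32*b + 192*a - 96*a*b with hd2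
  set d1 : ℝ := 4 + 8*b + 4*b^2 - 48*a - 24*a*b + 24*a*b^2 - 108*a^2*b^2 with hd1
  set d0 : ℝ := 4*a*(1 + b)^3 with hd0
  have hpoly : ∀ x, Δ x = d3*x^3 + d2*x^2 + d1*x + d0 := by
    intro x; rw [hΔ x]; ring
  have ha3 : (1:ℝ)/3 < a := by linarith
  have hQ : 0 < 27*a^2*b - 9*a*b + b + 1 := by
    nlinarith [mul_pos (mul_pos ha hb) (show (0:ℝ) < 3*a - 1 by linarith)]
  have hR : 0 < a*b^2 + b + 1 := by positivity
  have hdiscval : 18*d3*d2*d1*d0 - 4*d2^3*d0 + d2^2*d1^2 - 4*d3*d1^3 - 27*d3^2*d0^2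
      = -65536*b*(27*a^2*b - 9*a*b + b + 1)^3*(a*b^2 + b + 1) := by
    rw [hd3, hd2, hd1, hd0]; ring
  have hdiscneg : -65536*b*(27*a^2*b - 9*a*b + b + 1)^3*(a*b^2 + b + 1) < 0 := by
    have : 0 < 65536*b*(27*a^2*b - 9*a*b + b + 1)^3*(a*b^2 + b + 1) := by positivity
    linarith
  have hΔ0 : Δ 0 = 4*a*(b + 1)^3 := by rw [hΔ 0]; ring
  have hΔ0pos : 0 < Δ 0 := by rw [hΔ0]; positivity
  have hΔ1 : Δ 1 = -4*(27*a - b - 9)*(a*b^2 + b + 1) := by rw [hΔ 1]; ring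
  have hΔ1neg : Δ 1 < 0 := by
    rw [hΔ1]
    have h1 : 0 < 27*a - b - 9 := by linarith
    nlinarith [mul_pos h1 hR]
  -- uniqueness of roots
  have huniq : ∀ y z : ℝ, Δ y = 0 → Δ z = 0 → y = z := by
    intro y z hy hz
    by_contra hne
    have hy' : d3*y^3 + d2*y^2 + d1*y + d0 = 0 := by rw [← hpoly y]; exact hy
    have hz' : d3*z^3 + d2*z^2 + d1*z + d0 = 0 := by rw [← hpoly z]; exact hz
    have := cubic_two_roots_disc_nonneg d3 d2 d1 d0 y z hne hy' hz'
    rw [hdiscval] at this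
    linarith
  -- existence via IVT
  have hcont : ContinuousOn Δ (Set.Icc 0 1) := by
    have : Δ = fun x => d3*x^3 + d2*x^2 + d1*x + d0 := funext hpoly
    rw [this]; fun_prop
  have hmem : (0:ℝ) ∈ Set.Icc (Δ 1) (Δ 0) := ⟨le_of_lt hΔ1neg, le_of_lt hΔ0pos⟩
  obtain ⟨x₀, hx₀mem, hx₀⟩ := intermediate_value_Icc' (by norm_num : (0:ℝ) ≤ 1) hcont hmem
  refine ⟨⟨d3, d2, d1, d0, hpoly, hdiscval⟩, hdiscneg, ⟨x₀, hx₀, fun y hy => huniq y x₀ hy hx₀⟩,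
    hΔ0, hΔ0pos, hΔ1, hΔ1neg, ?_⟩
  intro x hx
  have hxeq : x = x₀ := huniq x x₀ hx hx₀
  subst hxeq
  obtain ⟨h0, h1⟩ := hx₀mem
  constructor
  · rcases lt_or_eq_of_le h0 with h' | h'
    · exact h'
    · exfalso; rw [← h'] at hx₀; linarith
  · rcases lt_or_eq_of_le h1 with h' | h'
    · exact h'
    · exfalso; rw [h'] at hx₀; linarith
end
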